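/- Let G be a P₆-free graph with efficient dominating set D and an induced C_k (k ≥ 5) in G² with real vertices v₁,...,v_k and auxiliary vertices x_i. If v_i ∈ D, then v_i is of type 2, i.e., v_i is adjacent in G to v_{i−1} or to v_{i+1}. -/

import Mathlib

open SimpleGraph Finset

variable {V : Type*}

/-- The square of a graph `G`: two distinct vertices are adjacent iff
their distance in `G` is 1 or 2. -/
def square (G : SimpleGraph V) : SimpleGraph V where
  Adj u v := u ≠ v ∧ (G.Adj u v ∨ ∃ w, G.Adj u w ∧ G.Adj w v)
  symm := by
    refine ⟨?_⟩
    rintro u v ⟨h, h2 | ⟨w, hw1, hw2⟩⟩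
    · exact ⟨h.symm, Or.inl h2.symm⟩
    · exact ⟨h.symm, Or.inr ⟨w, hw2.symm, hw1.symm⟩⟩
  loopless := by refine ⟨?_⟩; rintro u ⟨h, _⟩; exact h rfl

/-- `D` is an efficient dominating set of `G`: every vertex is dominated
(by closed neighborhoods) by exactly one vertex of `D`. -/
def IsEDS (G : SimpleGraph V) (D : Set V) : Prop :=
  ∀ v : V, ∃! d : V, d ∈ D ∧ (d = v ∨ G.Adj d v)

/-- `G` has no induced subgraph isomorphic to `H`. -/
def Free {W : Type*} (G : SimpleGraph V) (H : SimpleGraph W) : Prop :=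
  IsEmpty (H ↪g G)

/-- The house: the complement of the path on five vertices. -/
def house : SimpleGraph (Fin 5) := (pathGraph 5)ᶜ

/-- The domino: a `P₅` `x₁ … x₅` together with a vertex adjacent to `x₁, x₃, x₅`. -/
def domino : SimpleGraph (Fin 6) :=
  SimpleGraph.fromRel (fun i j =>
    (i, j) ∈ [((0 : Fin 6), (1 : Fin 6)), (1, 2), (2, 3), (3, 4), (5, 0), (5, 2), (5, 4)])

/-- A graph is hole-free if it contains no induced cycle `C_k`, `k ≥ 5`. -/
def HoleFree (G : SimpleGraph V) : Prop := ∀ k, 5 ≤ k → _root_.Free G (cycleGraph k)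

/-- A graph is chordal if it contains no induced cycle `C_k`, `k ≥ 4`. -/
def Chordal (G : SimpleGraph V) : Prop := ∀ k, 4 ≤ k → _root_.Free G (cycleGraph k)


/-!
Suppose `v_i ∈ D` is adjacent to neither cycle neighbour, so `v_{i-1} - x - v_i - y - v_{i+1}`
with `v_{i-1}` and `v_{i+1}` at distance at least 3 in `G`. The vertex `d ∈ D` dominating
`v_{i-1}` is a neighbour of it (otherwise `x` would be dominated twice), and by efficiency `d`
sees none of `v_i, x, y`. If `x ≁ y` then `d, v_{i-1}, x, v_i, y, v_{i+1}` is an induced `P₆`;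
if `x ∼ y`, the dominator `d'` of `v_{i+1}` gives the induced `P₆`
`d, v_{i-1}, x, y, v_{i+1}, d'`.
-/

theorem pathGraph_six_neighborSet_injective : Function.Injective (pathGraph 6).neighborSet := by
  intro i j h
  have key : ∀ l, (pathGraph 6).Adj i l ↔ (pathGraph 6).Adj j l := fun l => Set.ext_iff.mp h l
  simp only [pathGraph_adj] at key
  clear h
  revert i j
  decide

theorem injective_of_adj_iff {W : Type*} {G : SimpleGraph V} {H : SimpleGraph W} {p : W → V}
    (hH : Function.Injective H.neighborSet) (hp : ∀ i j, G.Adj (p i) (p j) ↔ H.Adj i j) :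
    Function.Injective p := fun i j hij =>
  hH <| Set.ext fun l => by simp only [mem_neighborSet, ← hp, hij]

theorem not_free_pathGraph_six {G : SimpleGraph V} {a b c d e f : V}
    (hab : G.Adj a b) (hbc : G.Adj b c) (hcd : G.Adj c d) (hde : G.Adj d e) (hef : G.Adj e f)
    (hac : ¬G.Adj a c) (had : ¬G.Adj a d) (hae : ¬G.Adj a e) (haf : ¬G.Adj a f)
    (hbd : ¬G.Adj b d) (hbe : ¬G.Adj b e) (hbf : ¬G.Adj b f)
    (hce : ¬G.Adj c e) (hcf : ¬G.Adj c f) (hdf : ¬G.Adj d f) :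
    ¬_root_.Free G (pathGraph 6) := by
  set p : Fin 6 → V := ![a, b, c, d, e, f]
  have hp : ∀ i j, G.Adj (p i) (p j) ↔ (pathGraph 6).Adj i j := by
    intro i j
    fin_cases i <;> fin_cases j <;> simp [p, pathGraph_adj, G.adj_comm, *]
  exact fun h6 =>
    h6.false ⟨⟨p, injective_of_adj_iff pathGraph_six_neighborSet_injective hp⟩, hp _ _⟩

namespace IsEDS

variable {G : SimpleGraph V} {D : Set V}

theorem eq_of_dominates_neighbor (hD : IsEDS G D) {b w d : V} (hb : b ∈ D) (hbw : G.Adj b w)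
    (hd : d ∈ D) (hdw : d = w ∨ G.Adj d w) : d = b :=
  (hD w).unique ⟨hd, hdw⟩ ⟨hb, .inr hbw⟩

theorem not_adj_of_mem (hD : IsEDS G D) {d d' : V} (hd : d ∈ D) (hd' : d' ∈ D) :
    ¬G.Adj d d' := fun h =>
  G.loopless.irrefl d' (hD.eq_of_dominates_neighbor hd h hd' (.inl rfl) ▸ h)

theorem exists_adj_not_adj_of_adj_adj (hD : IsEDS G D) {a x b : V} (hb : b ∈ D) (hab : a ≠ b)
    (hba : ¬G.Adj b a) (hax : G.Adj a x) (hxb : G.Adj x b) :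
    ∃ d ∈ D, G.Adj d a ∧ ∀ w, G.Adj b w → ¬G.Adj d w := by
  obtain ⟨d, ⟨hd, hda⟩, -⟩ := hD a
  have hdb : d ≠ b := by
    rintro rfl
    exact hda.elim (fun h => hab h.symm) hba
  have hda : G.Adj d a := hda.resolve_left <| by
    rintro rfl
    exact hdb (hD.eq_of_dominates_neighbor hb hxb.symm hd (.inr hax))
  exact ⟨d, hd, hda, fun w hbw hdw => hdb (hD.eq_of_dominates_neighbor hb hbw hd (.inr hdw))⟩

theorem adj_or_adj_of_mem (h6 : _root_.Free G (pathGraph 6)) (hD : IsEDS G D) {a b c : V}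
    (hb : b ∈ D) (hab : (square G).Adj a b) (hbc : (square G).Adj b c) (hac : a ≠ c)
    (hac₂ : ¬(square G).Adj a c) : G.Adj b a ∨ G.Adj b c := by
  by_contra! ⟨hba, hbc'⟩
  obtain ⟨x, hax, hxb⟩ := hab.2.resolve_left fun h => hba h.symm
  obtain ⟨y, hby, hyc⟩ := hbc.2.resolve_left hbc'
  have hac' : ¬G.Adj a c := fun h => hac₂ ⟨hac, .inl h⟩
  have hfar : ∀ w, G.Adj a w → ¬G.Adj w c := fun w haw hwc =>
    hac₂ ⟨hac, .inr ⟨w, haw, hwc⟩⟩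
  obtain ⟨d, hd, hda, hdN⟩ := hD.exists_adj_not_adj_of_adj_adj hb hab.1 hba hax hxb
  have hdc : ¬G.Adj d c := hfar d hda.symm
  by_cases hxy : G.Adj x y
  · obtain ⟨d', hd', hd'c, hd'N⟩ :=
      hD.exists_adj_not_adj_of_adj_adj hb hbc.1.symm hbc' hyc.symm hby.symm
    exact not_free_pathGraph_six hda hax hxy hyc hd'c.symm (hdN x hxb.symm) (hdN y hby) hdc
      (hD.not_adj_of_mem hd hd') (fun h => hfar y h hyc) hac' (fun h => hfar d' h hd'c)
      (hfar x hax) (fun h => hd'N x hxb.symm h.symm) (fun h => hd'N y hby h.symm) h6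
  · exact not_free_pathGraph_six hda hax hxb hby hyc (hdN x hxb.symm) (hD.not_adj_of_mem hd hb)
      (hdN y hby) hdc (fun h => hba h.symm) (fun h => hfar y h hyc) hac' hxy (hfar x hax) hbc' h6

end IsEDS

theorem ZMod.natCast_ne_zero_of_lt {k n : ℕ} (hn : 0 < n) (hnk : n < k) : (n : ZMod k) ≠ 0 := by
  rw [Ne, ZMod.natCast_eq_zero_iff]
  exact Nat.not_dvd_of_pos_of_lt hn hnk

theorem stmt12 (G : SimpleGraph V) (h6 : _root_.Free G (pathGraph 6))
    (D : Set V) (hED : IsEDS G D)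
    (k : ℕ) (hk : 5 ≤ k) (v : ZMod k → V) (hinj : Function.Injective v)
    (hadj : ∀ i : ZMod k, (square G).Adj (v i) (v (i + 1)))
    (hnon : ∀ i j : ZMod k, j ≠ i - 1 → j ≠ i → j ≠ i + 1 → ¬ (square G).Adj (v i) (v j)) :
    ∀ i : ZMod k, v i ∈ D → G.Adj (v i) (v (i - 1)) ∨ G.Adj (v i) (v (i + 1)) := by
  have h1 : (1 : ZMod k) ≠ 0 := by
    exact_mod_cast ZMod.natCast_ne_zero_of_lt (n := 1) one_pos (by omega)
  have h2 : (2 : ZMod k) ≠ 0 := by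
    exact_mod_cast ZMod.natCast_ne_zero_of_lt (n := 2) two_pos (by omega)
  have h3 : (3 : ZMod k) ≠ 0 := by
    exact_mod_cast ZMod.natCast_ne_zero_of_lt (n := 3) three_pos (by omega)
  intro i hi
  refine hED.adj_or_adj_of_mem h6 hi (by simpa using hadj (i - 1)) (hadj i) (hinj.ne ?_)
    fun h => hnon (i + 1) (i - 1) ?_ ?_ ?_ h.symm
  · exact fun h => h2 (by linear_combination -h)
  · exact fun h => h1 (by linear_combination -h)
  · exact fun h => h2 (by linear_combination -h)
  · exact fun h => h3 (by linear_combination -h)
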